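/- Let H(x,p) = v₊(x)(e^{2p} − 1) + v₋(x)(e^{−2p} − 1) on E = [-1,1], where v₊, v₋ : E → [0,∞) are continuous, v₊(x) > 0 for x ≠ 1, v₊(1) = 0 with a local decomposition v₊ = v₊,† · v₊,‡ near 1 (v₊,† decreasing, v₊,‡ continuous and nonzero at 1), and symmetrically for v₋ at −1. Then for every λ > 0 and h ∈ C(E), the equation f(x) − λH(x, f'(x)) − h(x) = 0 satisfies the comparison principle: every bounded usc viscosity subsolution u and bounded lsc viscosity supersolution v satisfy u ≤ v on E. -/

import Mathlib

open Real Filter Topology Set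

/-!
Doubling variables: let `(x, y)` maximize `u x - w y - c/2 (x - y)²` over `E × E`. The sub- and
supersolution inequalities at `x` and `y`, with the common momentum `p = c (x - y)`, give
`u x₀ - w x₀ ≤ λ (H(x, p) - H(y, p)) + h x - h y`, while `H(y, p)` stays bounded from above.
As `c → ∞` we have `x - y → 0`, so it suffices that `H(x, p) - H(y, p)` is asymptotically `≤ 0`
along such pairs.

For `y ≤ x` (so `p ≥ 0`) the only dangerous term is `(v₊ x - v₊ y)(e^{2p} - 1)`, where
`v₊ y (e^{2p} - 1)` is bounded. It is harmless as soon as `v₊ x ≤ r · v₊ y` with `r → 1`: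
away from `1` take `r = v₊ x / v₊ y`; near `1` the decreasing factor gives
`v₊ x ≤ (v₊,‡ x / v₊,‡ y) · v₊ y`. The case `x ≤ y` is the mirror image under `x ↦ -x`, which
exchanges `v₊` and `v₋`.
-/

section Comparison

variable {s : Set ℝ} {G : ℝ → ℝ → ℝ} {u w : ℝ → ℝ}

/-- Viscosity subsolution of `u - G(x, u') = 0` on `s`, tested with `C¹` functions. -/
def IsViscositySubsolution (s : Set ℝ) (G : ℝ → ℝ → ℝ) (u : ℝ → ℝ) : Prop :=
  ∀ f : ℝ → ℝ, ContDiff ℝ 1 f → ∀ x ∈ s, IsMaxOn (fun y => u y - f y) s x →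
    u x - G x (deriv f x) ≤ 0

def IsViscositySupersolution (s : Set ℝ) (G : ℝ → ℝ → ℝ) (w : ℝ → ℝ) : Prop :=
  ∀ f : ℝ → ℝ, ContDiff ℝ 1 f → ∀ x ∈ s, IsMinOn (fun y => w y - f y) s x →
    0 ≤ w x - G x (deriv f x)

noncomputable def doubledFun (u w : ℝ → ℝ) (c : ℝ) (q : ℝ × ℝ) : ℝ :=
  u q.1 - w q.2 - c / 2 * (q.1 - q.2) ^ 2

/-- What the doubling-of-variables argument needs from `G`: at a maximizer `(x, y)` of
`doubledFun u w c` the momentum is `c (x - y)`, and the supersolution property bounds `G y`. -/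
def StructureCondition (s : Set ℝ) (G : ℝ → ℝ → ℝ) : Prop :=
  ∀ z ∈ s, ∀ C ε : ℝ, 0 < ε → ∀ᶠ q in 𝓝[s] z ×ˢ 𝓝[s] z, ∀ c : ℝ, 0 ≤ c →
    G q.2 (c * (q.1 - q.2)) ≤ C → G q.1 (c * (q.1 - q.2)) - G q.2 (c * (q.1 - q.2)) ≤ ε

lemma upperSemicontinuousOn_doubledFun (hu : UpperSemicontinuousOn u s)
    (hw : LowerSemicontinuousOn w s) (c : ℝ) :
    UpperSemicontinuousOn (doubledFun u w c) (s ×ˢ s) := by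
  have h₁ : UpperSemicontinuousOn (fun q : ℝ × ℝ => u q.1) (s ×ˢ s) :=
    hu.comp continuous_fst.continuousOn fun q hq => hq.1
  have h₂ : UpperSemicontinuousOn (fun q : ℝ × ℝ => -w q.2) (s ×ˢ s) :=
    (continuous_neg.comp_lowerSemicontinuousOn_antitone hw fun _ _ => neg_le_neg).comp
      continuous_snd.continuousOn fun q hq => hq.2
  have h₃ : UpperSemicontinuousOn (fun q : ℝ × ℝ => -(c / 2 * (q.1 - q.2) ^ 2)) (s ×ˢ s) :=
    (Continuous.continuousOn (by fun_prop)).upperSemicontinuousOn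
  have hfun : doubledFun u w c = fun q => u q.1 + -w q.2 + -(c / 2 * (q.1 - q.2) ^ 2) := by
    funext q
    simp only [doubledFun]
    ring
  rw [hfun]
  exact (h₁.add h₂).add h₃

lemma exists_isMaxOn_doubledFun (hs : IsCompact s) (hne : s.Nonempty)
    (hu : UpperSemicontinuousOn u s) (hw : LowerSemicontinuousOn w s) (c : ℝ) :
    ∃ q ∈ s ×ˢ s, IsMaxOn (doubledFun u w c) (s ×ˢ s) q :=
  (upperSemicontinuousOn_doubledFun hu hw c).exists_isMaxOn (hne.prod hne) (hs.prod hs)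

lemma sub_add_penalty_le_of_isMaxOn {c x : ℝ} {q : ℝ × ℝ}
    (hq : IsMaxOn (doubledFun u w c) (s ×ˢ s) q) (hx : x ∈ s) :
    u x - w x + c / 2 * (q.1 - q.2) ^ 2 ≤ u q.1 - w q.2 := by
  have := isMaxOn_iff.1 hq (x, x) (mk_mem_prod hx hx)
  simp only [doubledFun, sub_self] at this
  linarith

lemma hasDerivAt_half_mul_sq_sub (c b a : ℝ) :
    HasDerivAt (fun t => c / 2 * (t - b) ^ 2) (c * (a - b)) a := by
  refine ((((hasDerivAt_id' a).sub_const b).fun_pow 2).const_mul (c / 2)).congr_deriv ?_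
  ring

lemma IsViscositySubsolution.le_of_isMaxOn_doubledFun (hu : IsViscositySubsolution s G u)
    {c : ℝ} {q : ℝ × ℝ} (hqs : q ∈ s ×ˢ s) (hq : IsMaxOn (doubledFun u w c) (s ×ˢ s) q) :
    u q.1 ≤ G q.1 (c * (q.1 - q.2)) := by
  have hmax : IsMaxOn (fun t => u t - c / 2 * (t - q.2) ^ 2) s q.1 :=
    isMaxOn_iff.2 fun t ht => by
      have := isMaxOn_iff.1 hq (t, q.2) (mk_mem_prod ht hqs.2)
      simp only [doubledFun] at this
      linarith
  have := hu _ (by fun_prop) q.1 hqs.1 hmax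
  rw [(hasDerivAt_half_mul_sq_sub c q.2 q.1).deriv] at this
  linarith

lemma IsViscositySupersolution.le_of_isMaxOn_doubledFun (hw : IsViscositySupersolution s G w)
    {c : ℝ} {q : ℝ × ℝ} (hqs : q ∈ s ×ˢ s) (hq : IsMaxOn (doubledFun u w c) (s ×ˢ s) q) :
    G q.2 (c * (q.1 - q.2)) ≤ w q.2 := by
  have hmin : IsMinOn (fun t => w t - -c / 2 * (t - q.1) ^ 2) s q.2 :=
    isMinOn_iff.2 fun t ht => by
      have := isMaxOn_iff.1 hq (q.1, t) (mk_mem_prod hqs.1 ht)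
      simp only [doubledFun] at this
      nlinarith
  have := hw _ (by fun_prop) q.2 hqs.2 hmin
  rw [(hasDerivAt_half_mul_sq_sub (-c) q.1 q.2).deriv,
    show -c * (q.2 - q.1) = c * (q.1 - q.2) by ring] at this
  linarith

lemma tendsto_zero_of_mul_sq_le {d : ℕ → ℝ} {K : ℝ}
    (hd : ∀ n : ℕ, ((n : ℝ) + 1) / 2 * d n ^ 2 ≤ K) : Tendsto d atTop (𝓝 0) := by
  have hsq : Tendsto (fun n => d n ^ 2) atTop (𝓝 0) := by
    refine squeeze_zero (fun n => sq_nonneg _) (fun n => ?_)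
      (by simpa using tendsto_one_div_add_atTop_nhds_zero_nat.const_mul (2 * K))
    rw [← div_eq_mul_inv, le_div_iff₀ (by positivity)]
    linarith [hd n]
  rw [tendsto_zero_iff_abs_tendsto_zero]
  simpa [Function.comp_def, sqrt_sq_eq_abs] using hsq.sqrt

lemma StructureCondition.const_mul_add (hG : StructureCondition s G) {lam : ℝ} (hlam : 0 < lam)
    {h : ℝ → ℝ} (hh : ContinuousOn h s) :
    StructureCondition s (fun x p => lam * G x p + h x) := by
  intro z hz C ε hε
  have hh₁ := (hh z hz).tendsto.comp (tendsto_fst (f := 𝓝[s] z) (g := 𝓝[s] z))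
  have hh₂ := (hh z hz).tendsto.comp (tendsto_snd (f := 𝓝[s] z) (g := 𝓝[s] z))
  have hdiff : Tendsto (fun q : ℝ × ℝ => h q.1 - h q.2) (𝓝[s] z ×ˢ 𝓝[s] z) (𝓝 0) := by
    simpa using hh₁.sub hh₂
  filter_upwards [hG z hz ((C - h z + 1) / lam) (ε / 2 / lam) (by positivity),
    hdiff.eventually_lt_const (half_pos hε), hh₂.eventually_const_lt (sub_one_lt (h z))]
    with q hGq hdq hlq c hc hCq
  simp only [Function.comp_apply] at hCq hlq ⊢
  have hb : G q.2 (c * (q.1 - q.2)) ≤ (C - h z + 1) / lam := by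
    rw [le_div_iff₀' hlam]
    linarith
  have := (le_div_iff₀' hlam).1 (hGq c hc hb)
  linarith

theorem le_of_structureCondition (hs : IsCompact s) (hG : StructureCondition s G)
    (hu : UpperSemicontinuousOn u s) (hw : LowerSemicontinuousOn w s)
    (hsub : IsViscositySubsolution s G u) (hsup : IsViscositySupersolution s G w) :
    ∀ x ∈ s, u x ≤ w x := by
  intro x₀ hx₀
  choose q hqs hq using fun n : ℕ => exists_isMaxOn_doubledFun hs ⟨x₀, hx₀⟩ hu hw ((n : ℝ) + 1)
  obtain ⟨Su, hSu⟩ := hu.bddAbove_of_isCompact hs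
  obtain ⟨Iw, hIw⟩ := hw.bddBelow_of_isCompact hs
  have hgap n := sub_add_penalty_le_of_isMaxOn (hq n) hx₀
  have hua n : u (q n).1 ≤ Su := hSu (mem_image_of_mem u (hqs n).1)
  have hwb n : Iw ≤ w (q n).2 := hIw (mem_image_of_mem w (hqs n).2)
  have hd : Tendsto (fun n => (q n).1 - (q n).2) atTop (𝓝 0) :=
    tendsto_zero_of_mul_sq_le (K := Su - Iw - (u x₀ - w x₀)) fun n => by linarith [hgap n, hua n, hwb n]
  obtain ⟨z, hz, φ, hφ, hz₁⟩ := hs.tendsto_subseq fun n => (hqs n).1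
  have hz₂ : Tendsto (fun k => (q (φ k)).2) atTop (𝓝 z) := by
    simpa using hz₁.sub (hd.comp hφ.tendsto_atTop)
  have hpair : Tendsto (fun k => q (φ k)) atTop (𝓝[s] z ×ˢ 𝓝[s] z) :=
    (tendsto_nhdsWithin_iff.2 ⟨hz₁, .of_forall fun k => (hqs (φ k)).1⟩).prodMk
      (tendsto_nhdsWithin_iff.2 ⟨hz₂, .of_forall fun k => (hqs (φ k)).2⟩)
  refine le_of_forall_pos_le_add fun ε hε => ?_
  obtain ⟨k, hk⟩ := (hpair.eventually (hG z hz (Su - (u x₀ - w x₀)) ε hε)).exists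
  have hsubk := hsub.le_of_isMaxOn_doubledFun (hqs (φ k)) (hq (φ k))
  have hsupk := hsup.le_of_isMaxOn_doubledFun (hqs (φ k)) (hq (φ k))
  have hpen : 0 ≤ ((φ k : ℝ) + 1) / 2 * ((q (φ k)).1 - (q (φ k)).2) ^ 2 := by positivity
  have := hk ((φ k : ℝ) + 1) (by positivity) (by linarith [hgap (φ k), hua (φ k)])
  linarith [hgap (φ k)]

end Comparison

section RatioControl

variable {v : ℝ → ℝ} {s : Set ℝ} {z : ℝ}

def RatioControlledAt (v : ℝ → ℝ) (s : Set ℝ) (z : ℝ) : Prop :=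
  ∃ r : ℝ × ℝ → ℝ, Tendsto r (𝓝[s] z ×ˢ 𝓝[s] z) (𝓝 1) ∧
    ∀ᶠ q in 𝓝[s] z ×ˢ 𝓝[s] z, q.2 ≤ q.1 → v q.1 ≤ r q * v q.2

lemma RatioControlledAt.eventually_sub_mul_le (hr : RatioControlledAt v s z)
    (hv : ∀ y ∈ s, 0 ≤ v y) (C : ℝ) {ε : ℝ} (hε : 0 < ε) :
    ∀ᶠ q in 𝓝[s] z ×ˢ 𝓝[s] z, q.2 ≤ q.1 → ∀ g, 0 ≤ g → v q.2 * g ≤ C →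
      (v q.1 - v q.2) * g ≤ ε := by
  obtain ⟨r, hr1, hrv⟩ := hr
  have hδ : 0 < ε / (|C| + 1) := by positivity
  filter_upwards [hrv, hr1.eventually_lt_const (lt_add_of_pos_right 1 hδ),
    tendsto_snd eventually_mem_nhdsWithin] with q hq hrq hqs hle g hg hC
  have hA : 0 ≤ v q.2 * g := mul_nonneg (hv _ hqs) hg
  calc (v q.1 - v q.2) * g ≤ (r q - 1) * (v q.2 * g) := by
        nlinarith [mul_le_mul_of_nonneg_right (hq hle) hg]
    _ ≤ ε / (|C| + 1) * |C| := mul_le_mul (by linarith) (hC.trans (le_abs_self C)) hA hδ.le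
    _ ≤ ε := by
        rw [div_mul_eq_mul_div, div_le_iff₀ (by positivity)]
        nlinarith

lemma ratioControlledAt_of_eqOn_zero (hv : ∀ y ∈ s, v y = 0) : RatioControlledAt v s z := by
  refine ⟨fun _ => 1, tendsto_const_nhds, ?_⟩
  filter_upwards [tendsto_fst eventually_mem_nhdsWithin,
    tendsto_snd eventually_mem_nhdsWithin] with q h₁ h₂ _
  rw [hv _ h₁, hv _ h₂, mul_zero]

lemma ratioControlledAt_of_pos (hv : ContinuousWithinAt v s z) (hz : 0 < v z) :
    RatioControlledAt v s z := by
  have h₁ : Tendsto (fun q : ℝ × ℝ => v q.1) (𝓝[s] z ×ˢ 𝓝[s] z) (𝓝 (v z)) :=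
    hv.tendsto.comp tendsto_fst
  have h₂ : Tendsto (fun q : ℝ × ℝ => v q.2) (𝓝[s] z ×ˢ 𝓝[s] z) (𝓝 (v z)) :=
    hv.tendsto.comp tendsto_snd
  have hr := h₁.div h₂ hz.ne'
  rw [div_self hz.ne'] at hr
  refine ⟨fun q => v q.1 / v q.2, hr, ?_⟩
  filter_upwards [h₂.eventually_const_lt hz] with q hq _
  rw [div_mul_cancel₀ _ hq.ne']

lemma ratioControlledAt_one_of_eq_mul {d dd : ℝ → ℝ} {U : Set ℝ}
    (hpos : ∀ x ∈ Icc (-1 : ℝ) 1, x ≠ 1 → 0 < v x) (hv1 : v 1 = 0)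
    (hU : U ∈ 𝓝[Icc (-1 : ℝ) 1] 1) (hvU : ∀ x ∈ U, v x = d x * dd x) (hd : AntitoneOn d U)
    (hddc : ContinuousOn dd U) (hdd1 : dd 1 ≠ 0) :
    RatioControlledAt v (Icc (-1) 1) 1 := by
  have h1U : (1 : ℝ) ∈ U := mem_of_mem_nhdsWithin (by norm_num) hU
  have hd1 : d 1 = 0 := by
    have := hvU 1 h1U
    rw [hv1] at this
    exact (mul_eq_zero.1 this.symm).resolve_right hdd1
  have hdd : Tendsto dd (𝓝[Icc (-1) 1] 1) (𝓝 (dd 1)) :=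
    (hddc 1 h1U).tendsto.mono_left (nhdsWithin_le_of_mem hU)
  -- to the left of `1`, `v > 0` and `d ≥ d 1 = 0` force `dd > 0`
  have hdd_pos : 0 < dd 1 := by
    have hleft : 𝓝[<] (1 : ℝ) ≤ 𝓝[Icc (-1) 1] 1 :=
      nhdsWithin_le_of_mem (mem_of_superset (Ioo_mem_nhdsLT (by norm_num)) Ioo_subset_Icc_self)
    refine lt_of_le_of_ne (ge_of_tendsto (hdd.mono_left hleft) ?_) hdd1.symm
    filter_upwards [hleft hU, hleft self_mem_nhdsWithin, self_mem_nhdsWithin] with t htU htI ht1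
    have hdt : 0 ≤ d t := hd1 ▸ hd htU h1U (le_of_lt ht1)
    have hvt := hpos t htI (ne_of_lt ht1)
    rw [hvU t htU] at hvt
    exact (pos_of_mul_pos_right hvt hdt).le
  have hdd₁ : Tendsto (fun q : ℝ × ℝ => dd q.1) (𝓝[Icc (-1) 1] 1 ×ˢ 𝓝[Icc (-1) 1] 1)
      (𝓝 (dd 1)) := hdd.comp tendsto_fst
  have hdd₂ : Tendsto (fun q : ℝ × ℝ => dd q.2) (𝓝[Icc (-1) 1] 1 ×ˢ 𝓝[Icc (-1) 1] 1)
      (𝓝 (dd 1)) := hdd.comp tendsto_snd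
  have hr := hdd₁.div hdd₂ hdd_pos.ne'
  rw [div_self hdd_pos.ne'] at hr
  refine ⟨fun q => dd q.1 / dd q.2, hr, ?_⟩
  filter_upwards [tendsto_fst hU, tendsto_snd hU, hdd₁.eventually_const_lt hdd_pos,
    hdd₂.eventually_const_lt hdd_pos] with q hq₁ hq₂ hpos₁ hpos₂ hle
  calc v q.1 = d q.1 * dd q.1 := hvU _ hq₁
    _ ≤ d q.2 * dd q.1 := mul_le_mul_of_nonneg_right (hd hq₂ hq₁ hle) hpos₁.le
    _ = dd q.1 / dd q.2 * v q.2 := by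
        rw [hvU _ hq₂]
        field_simp

end RatioControl

section Ehrenfest

variable {v vp vm : ℝ → ℝ}

lemma neg_mem_Icc_neg_one_one {x : ℝ} (hx : x ∈ Icc (-1 : ℝ) 1) : -x ∈ Icc (-1 : ℝ) 1 :=
  ⟨neg_le_neg hx.2, by linarith [hx.1]⟩

lemma tendsto_neg_nhdsWithin_Icc_neg_one_one (z : ℝ) :
    Tendsto Neg.neg (𝓝[Icc (-1 : ℝ) 1] z) (𝓝[Icc (-1 : ℝ) 1] (-z)) :=
  continuous_neg.continuousWithinAt.tendsto_nhdsWithin fun _ => neg_mem_Icc_neg_one_one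

/-- The hypothesis on `v₊`; `d` and `dd` are the factors `v₊,†` and `v₊,‡`. -/
def IsUpRate (v : ℝ → ℝ) : Prop :=
  (∀ x ∈ Icc (-1 : ℝ) 1, v x = 0) ∨
    ((∀ x ∈ Icc (-1 : ℝ) 1, x ≠ 1 → 0 < v x) ∧ v 1 = 0 ∧
      ∃ U ∈ 𝓝[Icc (-1 : ℝ) 1] 1, ∃ d dd : ℝ → ℝ,
        (∀ x ∈ U, v x = d x * dd x) ∧ AntitoneOn d U ∧ ContinuousOn dd U ∧ dd 1 ≠ 0)

def IsDownRate (v : ℝ → ℝ) : Prop :=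
  (∀ x ∈ Icc (-1 : ℝ) 1, v x = 0) ∨
    ((∀ x ∈ Icc (-1 : ℝ) 1, x ≠ -1 → 0 < v x) ∧ v (-1) = 0 ∧
      ∃ U ∈ 𝓝[Icc (-1 : ℝ) 1] (-1), ∃ d dd : ℝ → ℝ,
        (∀ x ∈ U, v x = d x * dd x) ∧ MonotoneOn d U ∧ ContinuousOn dd U ∧ dd (-1) ≠ 0)

lemma IsUpRate.nonneg (hv : IsUpRate v) {x : ℝ} (hx : x ∈ Icc (-1 : ℝ) 1) : 0 ≤ v x := by
  rcases hv with h0 | ⟨hpos, hv1, -⟩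
  · exact (h0 x hx).ge
  rcases eq_or_ne x 1 with rfl | hx1
  · exact hv1.ge
  · exact (hpos x hx hx1).le

lemma IsUpRate.ratioControlledAt (hv : IsUpRate v) (hvc : ContinuousOn v (Icc (-1) 1)) {z : ℝ}
    (hz : z ∈ Icc (-1 : ℝ) 1) : RatioControlledAt v (Icc (-1) 1) z := by
  rcases hv with h0 | ⟨hpos, hv1, U, hU, d, dd, hvU, hd, hddc, hdd1⟩
  · exact ratioControlledAt_of_eqOn_zero h0
  rcases eq_or_ne z 1 with rfl | hz1
  · exact ratioControlledAt_one_of_eq_mul hpos hv1 hU hvU hd hddc hdd1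
  · exact ratioControlledAt_of_pos (hvc z hz) (hpos z hz hz1)

lemma IsDownRate.comp_neg (hv : IsDownRate v) : IsUpRate fun t => v (-t) := by
  rcases hv with h0 | ⟨hpos, hv1, U, hU, d, dd, hvU, hd, hddc, hdd1⟩
  · exact Or.inl fun t ht => h0 (-t) (neg_mem_Icc_neg_one_one ht)
  refine Or.inr ⟨fun t ht ht1 => hpos (-t) (neg_mem_Icc_neg_one_one ht) (by simpa using ht1),
    by simpa using hv1, Neg.neg ⁻¹' U, ?_, fun t => d (-t), fun t => dd (-t),
    fun t ht => hvU (-t) ht, fun a ha b hb hab => hd hb ha (neg_le_neg hab),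
    hddc.comp continuous_neg.continuousOn fun _ ht => ht, by simpa using hdd1⟩
  exact tendsto_neg_nhdsWithin_Icc_neg_one_one 1 hU

lemma IsDownRate.nonneg (hv : IsDownRate v) {x : ℝ} (hx : x ∈ Icc (-1 : ℝ) 1) : 0 ≤ v x := by
  simpa using hv.comp_neg.nonneg (neg_mem_Icc_neg_one_one hx)

noncomputable def ehrenfestHam (vp vm : ℝ → ℝ) (x p : ℝ) : ℝ :=
  vp x * (exp (2 * p) - 1) + vm x * (exp (-(2 * p)) - 1)

lemma ehrenfestHam_neg (vp vm : ℝ → ℝ) (x p : ℝ) :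
    ehrenfestHam (fun t => vm (-t)) (fun t => vp (-t)) (-x) (-p) = ehrenfestHam vp vm x p := by
  simp only [ehrenfestHam, neg_neg, mul_neg]
  ring

lemma eventually_ehrenfestHam_sub_le {s : Set ℝ} {z : ℝ} (hvp : RatioControlledAt vp s z)
    (hvp0 : ∀ y ∈ s, 0 ≤ vp y) (hvm : ContinuousWithinAt vm s z) (hvm0 : ∀ y ∈ s, 0 ≤ vm y)
    (C : ℝ) {ε : ℝ} (hε : 0 < ε) :
    ∀ᶠ q in 𝓝[s] z ×ˢ 𝓝[s] z, q.2 ≤ q.1 → ∀ p, 0 ≤ p → ehrenfestHam vp vm q.2 p ≤ C →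
      ehrenfestHam vp vm q.1 p - ehrenfestHam vp vm q.2 p ≤ ε := by
  have hvm₁ : Tendsto (fun q : ℝ × ℝ => vm q.1) (𝓝[s] z ×ˢ 𝓝[s] z) (𝓝 (vm z)) :=
    hvm.tendsto.comp tendsto_fst
  have hvm₂ : Tendsto (fun q : ℝ × ℝ => vm q.2) (𝓝[s] z ×ˢ 𝓝[s] z) (𝓝 (vm z)) :=
    hvm.tendsto.comp tendsto_snd
  have hvm_diff : Tendsto (fun q : ℝ × ℝ => vm q.2 - vm q.1) (𝓝[s] z ×ˢ 𝓝[s] z) (𝓝 0) := by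
    simpa using hvm₂.sub hvm₁
  filter_upwards [hvp.eventually_sub_mul_le hvp0 (C + vm z + 1) (half_pos hε),
    hvm₂.eventually_lt_const (lt_add_one (vm z)), hvm_diff.eventually_lt_const (half_pos hε),
    tendsto_snd eventually_mem_nhdsWithin] with q hvpq hvmq hdiffq hq₂ hle p hp hC
  simp only [ehrenfestHam] at hC ⊢
  have hgrow : 0 ≤ exp (2 * p) - 1 := sub_nonneg.2 (one_le_exp (by positivity))
  have hdecay : exp (-(2 * p)) ≤ 1 := exp_le_one_iff.2 (by linarith)
  have hvm_q₂ : 0 ≤ vm q.2 * exp (-(2 * p)) := mul_nonneg (hvm0 _ hq₂) (exp_pos _).le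
  have hvp_term := hvpq hle _ hgrow (by linarith)
  -- `e^{-2p} - 1 ∈ [-1, 0]`, so only a decrease of `vm` could hurt, and it is small
  have hvm_term : (vm q.1 - vm q.2) * (exp (-(2 * p)) - 1) ≤ ε / 2 := by
    nlinarith [mul_nonneg (sub_nonneg.2 hdiffq.le) (sub_nonneg.2 hdecay), exp_pos (-(2 * p))]
  linarith

lemma structureCondition_ehrenfestHam (hvpc : ContinuousOn vp (Icc (-1) 1))
    (hvmc : ContinuousOn vm (Icc (-1) 1)) (hvp : IsUpRate vp) (hvm : IsDownRate vm) :
    StructureCondition (Icc (-1) 1) (ehrenfestHam vp vm) := by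
  intro z hz C ε hε
  have hneg := tendsto_neg_nhdsWithin_Icc_neg_one_one z
  have hvpc' : ContinuousOn (fun t => vp (-t)) (Icc (-1) 1) :=
    hvpc.comp continuous_neg.continuousOn fun _ => neg_mem_Icc_neg_one_one
  have hvmc' : ContinuousOn (fun t => vm (-t)) (Icc (-1) 1) :=
    hvmc.comp continuous_neg.continuousOn fun _ => neg_mem_Icc_neg_one_one
  have hleft := eventually_ehrenfestHam_sub_le
    (hvm.comp_neg.ratioControlledAt hvmc' (neg_mem_Icc_neg_one_one hz))
    (fun _ => hvm.comp_neg.nonneg) (hvpc' _ (neg_mem_Icc_neg_one_one hz))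
    (fun _ hy => hvp.nonneg (neg_mem_Icc_neg_one_one hy)) C hε
  filter_upwards [eventually_ehrenfestHam_sub_le (hvp.ratioControlledAt hvpc hz) (fun _ => hvp.nonneg)
    (hvmc z hz) (fun _ => hvm.nonneg) C hε, (hneg.prodMap hneg).eventually hleft]
    with q hright hleft c hc hC
  rcases le_total q.2 q.1 with hle | hle
  · exact hright hle _ (mul_nonneg hc (sub_nonneg.2 hle)) hC
  · have := hleft (neg_le_neg hle) _ (mul_nonneg hc (sub_nonneg.2 hle))
    rw [show c * (q.2 - q.1) = -(c * (q.1 - q.2)) by ring] at this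
    simp only [Prod.map_fst, Prod.map_snd, ehrenfestHam_neg] at this
    exact this hC

end Ehrenfest

theorem stmt_10_general (vp vm : ℝ → ℝ)
    (hvpc : ContinuousOn vp (Set.Icc (-1) 1)) (hvmc : ContinuousOn vm (Set.Icc (-1) 1))
    -- conditions on v₊ : either identically zero, or positive away from 1 and
    -- admitting a decreasing × continuous-nonvanishing decomposition near 1
    (hvp : (∀ x ∈ Set.Icc (-1:ℝ) 1, vp x = 0) ∨
      ((∀ x ∈ Set.Icc (-1:ℝ) 1, x ≠ 1 → 0 < vp x) ∧ vp 1 = 0 ∧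
        ∃ U ∈ nhdsWithin (1:ℝ) (Set.Icc (-1:ℝ) 1), ∃ vpd vpdd : ℝ → ℝ,
          (∀ x ∈ U, vp x = vpd x * vpdd x) ∧ AntitoneOn vpd U ∧
          ContinuousOn vpdd U ∧ vpdd 1 ≠ 0))
    -- conditions on v₋ : symmetric at −1, with increasing monotone factor
    (hvm : (∀ x ∈ Set.Icc (-1:ℝ) 1, vm x = 0) ∨
      ((∀ x ∈ Set.Icc (-1:ℝ) 1, x ≠ -1 → 0 < vm x) ∧ vm (-1) = 0 ∧
        ∃ U ∈ nhdsWithin (-1:ℝ) (Set.Icc (-1:ℝ) 1), ∃ vmd vmdd : ℝ → ℝ,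
          (∀ x ∈ U, vm x = vmd x * vmdd x) ∧ MonotoneOn vmd U ∧
          ContinuousOn vmdd U ∧ vmdd (-1) ≠ 0))
    (H : ℝ → ℝ → ℝ)
    (hH : ∀ x p, H x p = vp x * (exp (2 * p) - 1) + vm x * (exp (-(2 * p)) - 1))
    (lam : ℝ) (hlam : 0 < lam) (h : ℝ → ℝ) (hh : ContinuousOn h (Set.Icc (-1) 1))
    (u w : ℝ → ℝ)
    (hu_usc : UpperSemicontinuousOn u (Set.Icc (-1) 1))
    (hw_lsc : LowerSemicontinuousOn w (Set.Icc (-1) 1))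
    -- u is a viscosity subsolution of f − λH(·, f') − h = 0:
    (hu_sub : ∀ f : ℝ → ℝ, ContDiff ℝ 1 f → ∀ x ∈ Set.Icc (-1:ℝ) 1,
      IsMaxOn (fun y => u y - f y) (Set.Icc (-1) 1) x →
      u x - lam * H x (deriv f x) - h x ≤ 0)
    -- w is a viscosity supersolution of f − λH(·, f') − h = 0:
    (hw_super : ∀ f : ℝ → ℝ, ContDiff ℝ 1 f → ∀ x ∈ Set.Icc (-1:ℝ) 1,
      IsMinOn (fun y => w y - f y) (Set.Icc (-1) 1) x →
      0 ≤ w x - lam * H x (deriv f x) - h x) :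
    ∀ x ∈ Set.Icc (-1:ℝ) 1, u x ≤ w x := by
  obtain rfl : H = ehrenfestHam vp vm := funext₂ hH
  refine le_of_structureCondition isCompact_Icc
    ((structureCondition_ehrenfestHam hvpc hvmc hvp hvm).const_mul_add hlam hh) hu_usc hw_lsc
    (fun f hf x hx hmax => ?_) (fun f hf x hx hmin => ?_)
  · simpa only [sub_sub] using hu_sub f hf x hx hmax
  · simpa only [sub_sub] using hw_super f hf x hx hmin

/-- Comparison principle for the one-dimensional Ehrenfest Hamilton–Jacobi equation
`f(x) − λH(x,f'(x)) − h(x) = 0` on `E = [-1,1]`, where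
`H(x,p) = v₊(x)(e^{2p} − 1) + v₋(x)(e^{−2p} − 1)` and `v₊, v₋` satisfy the
positivity/decomposition conditions at the boundary: every bounded usc viscosity
subsolution `u` and bounded lsc viscosity supersolution `w` satisfy `u ≤ w`. -/
theorem stmt_10 (vp vm : ℝ → ℝ)
    (hvpc : ContinuousOn vp (Set.Icc (-1) 1)) (hvmc : ContinuousOn vm (Set.Icc (-1) 1))
    (hvp0 : ∀ x ∈ Set.Icc (-1:ℝ) 1, 0 ≤ vp x) (hvm0 : ∀ x ∈ Set.Icc (-1:ℝ) 1, 0 ≤ vm x)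
    -- conditions on v₊ : either identically zero, or positive away from 1 and
    -- admitting a decreasing × continuous-nonvanishing decomposition near 1
    (hvp : (∀ x ∈ Set.Icc (-1:ℝ) 1, vp x = 0) ∨
      ((∀ x ∈ Set.Icc (-1:ℝ) 1, x ≠ 1 → 0 < vp x) ∧ vp 1 = 0 ∧
        ∃ U ∈ nhdsWithin (1:ℝ) (Set.Icc (-1:ℝ) 1), ∃ vpd vpdd : ℝ → ℝ,
          (∀ x ∈ U, vp x = vpd x * vpdd x) ∧ AntitoneOn vpd U ∧
          ContinuousOn vpdd U ∧ vpdd 1 ≠ 0))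
    -- conditions on v₋ : symmetric at −1, with increasing monotone factor
    (hvm : (∀ x ∈ Set.Icc (-1:ℝ) 1, vm x = 0) ∨
      ((∀ x ∈ Set.Icc (-1:ℝ) 1, x ≠ -1 → 0 < vm x) ∧ vm (-1) = 0 ∧
        ∃ U ∈ nhdsWithin (-1:ℝ) (Set.Icc (-1:ℝ) 1), ∃ vmd vmdd : ℝ → ℝ,
          (∀ x ∈ U, vm x = vmd x * vmdd x) ∧ MonotoneOn vmd U ∧
          ContinuousOn vmdd U ∧ vmdd (-1) ≠ 0))
    (H : ℝ → ℝ → ℝ)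
    (hH : ∀ x p, H x p = vp x * (exp (2 * p) - 1) + vm x * (exp (-(2 * p)) - 1))
    (lam : ℝ) (hlam : 0 < lam) (h : ℝ → ℝ) (hh : ContinuousOn h (Set.Icc (-1) 1))
    (u w : ℝ → ℝ)
    (hu_usc : UpperSemicontinuousOn u (Set.Icc (-1) 1))
    (hw_lsc : LowerSemicontinuousOn w (Set.Icc (-1) 1))
    (hub : ∃ M, ∀ x ∈ Set.Icc (-1:ℝ) 1, |u x| ≤ M)
    (hwb : ∃ M, ∀ x ∈ Set.Icc (-1:ℝ) 1, |w x| ≤ M)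
    -- u is a viscosity subsolution of f − λH(·, f') − h = 0:
    (hu_sub : ∀ f : ℝ → ℝ, ContDiff ℝ 1 f → ∀ x ∈ Set.Icc (-1:ℝ) 1,
      IsMaxOn (fun y => u y - f y) (Set.Icc (-1) 1) x →
      u x - lam * H x (deriv f x) - h x ≤ 0)
    -- w is a viscosity supersolution of f − λH(·, f') − h = 0:
    (hw_super : ∀ f : ℝ → ℝ, ContDiff ℝ 1 f → ∀ x ∈ Set.Icc (-1:ℝ) 1,
      IsMinOn (fun y => w y - f y) (Set.Icc (-1) 1) x →
      0 ≤ w x - lam * H x (deriv f x) - h x) :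
    ∀ x ∈ Set.Icc (-1:ℝ) 1, u x ≤ w x :=
  stmt_10_general vp vm hvpc hvmc hvp hvm H hH lam hlam h hh u w hu_usc hw_lsc hu_sub hw_super
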